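/- arXiv:2309.08349 — 2 statements merged into one kernel-verified Lean document; each statement's English description precedes it below -/
import Mathlib

section
/- Let m ∈ ℕ and let A be an m×m real matrix. In the Grassmann algebra Ω_m, the Berezin integral of the Gaussian element satisfies (∏_{i=1}^m ∂_{ψ̄_i}∂_{ψ_i}) exp(∑_{i,j=1}^m ψ_i A_{ij} ψ̄_j) = det A. -/
/-!
Grassmann algebra Ω_m realized as the exterior algebra of ℝ^{2m}, with generators
ψ_1,…,ψ_m (indexed by `Sum.inl`) and ψ̄_1,…,ψ̄_m (indexed by `Sum.inr`).
The left derivative ∂_ξ is contraction with the corresponding dual-basis functional,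
the Berezin integral is the composition ∂_{ψ̄_1}∂_{ψ_1}⋯∂_{ψ̄_m}∂_{ψ_m}, and
exp(F) = ∑_{k≥0} F^k/k! (a finite sum by nilpotency, here a `finsum`).
-/

noncomputable section

namespace Fermion

/-- The Grassmann algebra with `2m` generators. -/
abbrev Gr (m : ℕ) := ExteriorAlgebra ℝ ((Fin m ⊕ Fin m) → ℝ)

/-- The generator `ψ_i`. -/
def psi {m : ℕ} (i : Fin m) : Gr m :=
  ExteriorAlgebra.ι ℝ (Pi.single (Sum.inl i) 1)

/-- The generator `ψ̄_i`. -/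
def psibar {m : ℕ} (i : Fin m) : Gr m :=
  ExteriorAlgebra.ι ℝ (Pi.single (Sum.inr i) 1)

/-- The left derivative with respect to the generator indexed by `x`, realized as
contraction with the dual-basis functional of that generator. -/
def der {m : ℕ} (x : Fin m ⊕ Fin m) : Module.End ℝ (Gr m) :=
  CliffordAlgebra.contractLeft (LinearMap.proj x)

/-- The Berezin integral `(∏_{i=1}^m ∂_{ψ̄_i}∂_{ψ_i})`.  The operators
`∂_{ψ̄_i}∂_{ψ_i}` pairwise commute, so the order of composition is immaterial. -/
def berezin (m : ℕ) : Module.End ℝ (Gr m) :=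
  ((List.finRange m).map (fun i => der (Sum.inr i) * der (Sum.inl i))).prod

/-- `exp` of a Grassmann element: `∑_{k≥0} F^k/k!`, a finite sum for nilpotent `F`. -/
def gexp {m : ℕ} (F : Gr m) : Gr m := ∑ᶠ k : ℕ, (k.factorial : ℝ)⁻¹ • F ^ k

/-! ### Auxiliary development -/

section Aux

variable {m : ℕ}

open scoped List

/-- The underlying vector space. -/
abbrev V (m : ℕ) : Type := (Fin m ⊕ Fin m) → ℝ

/-- basis vectors -/
def e {m : ℕ} (x : Fin m ⊕ Fin m) : V m := Pi.single x 1

local notation "ι" => ExteriorAlgebra.ι ℝ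

lemma e_apply_self (x : Fin m ⊕ Fin m) : e x x = 1 := Pi.single_eq_same x 1

lemma e_apply_ne {x y : Fin m ⊕ Fin m} (h : y ≠ x) : e x y = 0 :=
  Pi.single_eq_of_ne h 1

lemma psi_eq (i : Fin m) : psi i = ι (e (Sum.inl i)) := rfl
lemma psibar_eq (i : Fin m) : psibar i = ι (e (Sum.inr i)) := rfl

/-- fundamental contraction rules -/
lemma der_ι_mul (x : Fin m ⊕ Fin m) (v : V m) (a : Gr m) :
    der x (ι v * a) = v x • a - ι v * der x a :=
  CliffordAlgebra.contractLeft_ι_mul _ v a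

lemma der_one (x : Fin m ⊕ Fin m) : der x (1 : Gr m) = 0 :=
  CliffordAlgebra.contractLeft_one _ _

lemma der_ι (x : Fin m ⊕ Fin m) (v : V m) : der x (ι v) = algebraMap ℝ (Gr m) (v x) :=
  CliffordAlgebra.contractLeft_ι _ _ v

lemma der_ι_mul_of_zero (x : Fin m ⊕ Fin m) {v : V m} (hv : v x = 0) (a : Gr m) :
    der x (ι v * a) = -(ι v * der x a) := by
  rw [der_ι_mul, hv, zero_smul, zero_sub]

/-- generators anticommute -/
lemma gen_anticomm (v w : V m) : ι v * ι w = -(ι w * ι v) := by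
  have h := CliffordAlgebra.ι_mul_ι_add_swap (Q := (0 : QuadraticForm ℝ (V m))) v w
  have h0 : QuadraticMap.polar (0 : QuadraticForm ℝ (V m)) v w = 0 := by
    simp [QuadraticMap.polar]
  rw [h0, map_zero] at h
  linear_combination (norm := noncomm_ring) h

/-- abstract: products of anticommuting elements commute -/
lemma comm_of_anticomm {R : Type*} [Ring R] {a b c d : R}
    (hac : a * c = -(c * a)) (had : a * d = -(d * a))
    (hbc : b * c = -(c * b)) (hbd : b * d = -(d * b)) :
    (a * b) * (c * d) = (c * d) * (a * b) := by
  have h1 : a * b * (c * d) = a * (b * c) * d := by noncomm_ring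
  rw [h1, hbc]
  have h2 : a * -(c * b) * d = -((a * c) * (b * d)) := by noncomm_ring
  rw [h2, hac, hbd]
  have h3 : -(-(c * a) * -(d * b)) = -(c * (a * d) * b) := by noncomm_ring
  rw [h3, had]
  noncomm_ring

lemma anti3 {R : Type*} [Ring R] {b c d : R}
    (hbc : b * c = -(c * b)) (hbd : b * d = -(d * b)) (hcd : c * d = -(d * c)) :
    b * (c * d) = -(d * (c * b)) := by
  rw [hcd]
  have h1 : b * -(d * c) = -((b * d) * c) := by noncomm_ring
  rw [h1, hbd]
  have h2 : - (-(d * b) * c) = d * (b * c) := by noncomm_ring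
  rw [h2, hbc]
  noncomm_ring

/-- the quadratic pair `p i j = ψ_i ψ̄_j` -/
def p {m : ℕ} (i j : Fin m) : Gr m := psi i * psibar j

lemma pair_commute_gen (v w u z : V m) :
    (ι v * ι w) * (ι u * ι z) = (ι u * ι z) * (ι v * ι w) :=
  comm_of_anticomm (gen_anticomm _ _) (gen_anticomm _ _) (gen_anticomm _ _) (gen_anticomm _ _)

lemma p_commute (i j i' j' : Fin m) : Commute (p i j) (p i' j') :=
  pair_commute_gen _ _ _ _

lemma p_mul_p_same_fst (i j j' : Fin m) : p i j * p i j' = 0 := by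
  show (ι _ * ι _) * (ι _ * ι _) = 0
  have h : ι (e (Sum.inr j)) * ι (e (Sum.inl i)) =
      -(ι (e (Sum.inl i)) * ι (e (Sum.inr j))) := gen_anticomm _ _
  calc (ι (e (Sum.inl i)) * ι (e (Sum.inr j))) * (ι (e (Sum.inl i)) * ι (e (Sum.inr j'))) =
      ι (e (Sum.inl i)) * (ι (e (Sum.inr j)) * ι (e (Sum.inl i))) * ι (e (Sum.inr j')) := by
        noncomm_ring
    _ = ι (e (Sum.inl i)) * -(ι (e (Sum.inl i)) * ι (e (Sum.inr j))) * ι (e (Sum.inr j')) := by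
        rw [h]
    _ = -((ι (e (Sum.inl i)) * ι (e (Sum.inl i))) * (ι (e (Sum.inr j)) * ι (e (Sum.inr j')))) := by
        noncomm_ring
    _ = 0 := by rw [ExteriorAlgebra.ι_sq_zero]; simp

lemma p_mul_p_same_snd (i i' j : Fin m) : p i j * p i' j = 0 := by
  show (ι _ * ι _) * (ι _ * ι _) = 0
  have h : ι (e (Sum.inr j)) * ι (e (Sum.inl i')) =
      -(ι (e (Sum.inl i')) * ι (e (Sum.inr j))) := gen_anticomm _ _
  calc (ι (e (Sum.inl i)) * ι (e (Sum.inr j))) * (ι (e (Sum.inl i')) * ι (e (Sum.inr j))) =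
      ι (e (Sum.inl i)) * (ι (e (Sum.inr j)) * ι (e (Sum.inl i'))) * ι (e (Sum.inr j)) := by
        noncomm_ring
    _ = ι (e (Sum.inl i)) * -(ι (e (Sum.inl i')) * ι (e (Sum.inr j))) * ι (e (Sum.inr j)) := by
        rw [h]
    _ = -((ι (e (Sum.inl i)) * ι (e (Sum.inl i'))) * (ι (e (Sum.inr j)) * ι (e (Sum.inr j)))) := by
        noncomm_ring
    _ = 0 := by rw [ExteriorAlgebra.ι_sq_zero]; simp

/-- swapping the `ψ̄` entries of two pairs flips the sign -/
lemma p_swap (a b x y : Fin m) : p a x * p b y = -(p a y * p b x) := by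
  show (ι _ * ι _) * (ι _ * ι _) = -((ι _ * ι _) * (ι _ * ι _))
  have h := anti3 (b := ι (e (Sum.inr x))) (c := ι (e (Sum.inl b))) (d := ι (e (Sum.inr y)))
    (gen_anticomm _ _) (gen_anticomm _ _) (gen_anticomm _ _)
  calc (ι (e (Sum.inl a)) * ι (e (Sum.inr x))) * (ι (e (Sum.inl b)) * ι (e (Sum.inr y)))
      = ι (e (Sum.inl a)) * (ι (e (Sum.inr x)) * (ι (e (Sum.inl b)) * ι (e (Sum.inr y)))) := by
        noncomm_ring
    _ = ι (e (Sum.inl a)) * -(ι (e (Sum.inr y)) * (ι (e (Sum.inl b)) * ι (e (Sum.inr x)))) := by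
        rw [h]
    _ = -((ι (e (Sum.inl a)) * ι (e (Sum.inr y))) * (ι (e (Sum.inl b)) * ι (e (Sum.inr x)))) := by
        noncomm_ring

lemma pairwise_commute_map {α β : Type*} [Mul β] (f : α → β)
    (hf : ∀ a b, Commute (f a) (f b)) (l : List α) : (l.map f).Pairwise Commute := by
  induction l with
  | nil => simp
  | cons a l ih =>
    rw [List.map_cons, List.pairwise_cons]
    exact ⟨fun x hx => by
      obtain ⟨b, _, rfl⟩ := List.mem_map.mp hx
      exact hf a b, ih⟩

/-! ### the submodule of elements avoiding a coordinate -/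

/-- span of products of generators vanishing at coordinate `x` -/
def avoid (x : Fin m ⊕ Fin m) : Submodule ℝ (Gr m) :=
  Submodule.span ℝ {a | ∃ l : List (V m), (∀ v ∈ l, v x = 0) ∧ a = (l.map ι).prod}

lemma one_mem_avoid (x : Fin m ⊕ Fin m) : (1 : Gr m) ∈ avoid x :=
  Submodule.subset_span ⟨[], by simp, by simp⟩

lemma mul_mem_avoid {x : Fin m ⊕ Fin m} {v : V m} (hv : v x = 0) {a : Gr m}
    (ha : a ∈ avoid x) : ι v * a ∈ avoid x := by
  induction ha using Submodule.span_induction with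
  | mem a ha =>
    obtain ⟨l, hl, rfl⟩ := ha
    exact Submodule.subset_span ⟨v :: l, by
      intro w hw
      rcases List.mem_cons.mp hw with h | h
      · exact h ▸ hv
      · exact hl w h, by simp⟩
  | zero => simp [avoid, Submodule.zero_mem]
  | add a b _ _ iha ihb => rw [mul_add]; exact Submodule.add_mem _ iha ihb
  | smul c a _ ih => rw [mul_smul_comm]; exact Submodule.smul_mem _ _ ih

lemma der_list_mem_avoid (x y : Fin m ⊕ Fin m) (l : List (V m))
    (hl : ∀ v ∈ l, v x = 0) : der y ((l.map ι).prod) ∈ avoid x := by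
  induction l with
  | nil => simp [der_one, Submodule.zero_mem]
  | cons v l ih =>
    have hv : v x = 0 := hl v List.mem_cons_self
    have hl' : ∀ w ∈ l, w x = 0 := fun w hw => hl w (List.mem_cons_of_mem _ hw)
    rw [List.map_cons, List.prod_cons, der_ι_mul]
    refine Submodule.sub_mem _ (Submodule.smul_mem _ _ ?_) (mul_mem_avoid hv (ih hl'))
    exact Submodule.subset_span ⟨l, hl', rfl⟩

lemma der_mem_avoid {x : Fin m ⊕ Fin m} (y : Fin m ⊕ Fin m) {a : Gr m}
    (ha : a ∈ avoid x) : der y a ∈ avoid x := by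
  induction ha using Submodule.span_induction with
  | mem a ha =>
    obtain ⟨l, hl, rfl⟩ := ha
    exact der_list_mem_avoid x y l hl
  | zero => simp [Submodule.zero_mem]
  | add a b _ _ iha ihb => rw [map_add]; exact Submodule.add_mem _ iha ihb
  | smul c a _ ih => rw [map_smul]; exact Submodule.smul_mem _ _ ih

lemma der_list_eq_zero (x : Fin m ⊕ Fin m) (l : List (V m))
    (hl : ∀ v ∈ l, v x = 0) : der x ((l.map ι).prod) = 0 := by
  induction l with
  | nil => simp [der_one]
  | cons v l ih =>
    have hv : v x = 0 := hl v List.mem_cons_self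
    have hl' : ∀ w ∈ l, w x = 0 := fun w hw => hl w (List.mem_cons_of_mem _ hw)
    rw [List.map_cons, List.prod_cons, der_ι_mul_of_zero x hv, ih hl', mul_zero, neg_zero]

lemma der_eq_zero_of_mem_avoid {x : Fin m ⊕ Fin m} {a : Gr m}
    (ha : a ∈ avoid x) : der x a = 0 := by
  induction ha using Submodule.span_induction with
  | mem a ha =>
    obtain ⟨l, hl, rfl⟩ := ha
    exact der_list_eq_zero x l hl
  | zero => simp
  | add a b _ _ iha ihb => rw [map_add, iha, ihb, add_zero]
  | smul c a _ ih => rw [map_smul, ih, smul_zero]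

/-! ### products of pairs -/

/-- the monomial `∏_t p (h t).1 (h t).2` -/
def P {m k : ℕ} (h : Fin k → Fin m × Fin m) : Gr m :=
  ((List.finRange k).map (fun t => p (h t).1 (h t).2)).prod

lemma P_cons {k : ℕ} (a : Fin m × Fin m) (h : Fin k → Fin m × Fin m) :
    P (Fin.cons a h) = p a.1 a.2 * P h := by
  rw [P, List.finRange_succ, List.map_cons, List.prod_cons, List.map_map]
  congr 2

/-- expansion of the Gaussian power -/
lemma F_pow (A : Matrix (Fin m) (Fin m) ℝ) (k : ℕ) :
    (∑ a : Fin m × Fin m, A a.1 a.2 • (psi a.1 * psibar a.2)) ^ k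
      = ∑ h : Fin k → Fin m × Fin m, (∏ t, A (h t).1 (h t).2) • P h := by
  induction k with
  | zero =>
    rw [pow_zero, Fintype.sum_unique]
    simp [P]
  | succ k ih =>
    rw [pow_succ', ih]
    calc (∑ a : Fin m × Fin m, A a.1 a.2 • (psi a.1 * psibar a.2)) *
          ∑ h : Fin k → Fin m × Fin m, (∏ t, A (h t).1 (h t).2) • P h
        = ∑ h : Fin k → Fin m × Fin m, ∑ a : Fin m × Fin m,
            (A a.1 a.2 * ∏ t, A (h t).1 (h t).2) • (p a.1 a.2 * P h) := by
          rw [Finset.mul_sum]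
          refine Finset.sum_congr rfl fun h _ => ?_
          rw [Finset.sum_mul]
          refine Finset.sum_congr rfl fun a _ => ?_
          rw [smul_mul_assoc, mul_smul_comm, smul_smul]
          rfl
      _ = ∑ a : Fin m × Fin m, ∑ h : Fin k → Fin m × Fin m,
            (∏ t : Fin (k+1), A ((Fin.cons a h : Fin (k+1) → Fin m × Fin m) t).1
              ((Fin.cons a h : Fin (k+1) → Fin m × Fin m) t).2) • P (Fin.cons a h) := by
          rw [Finset.sum_comm]
          refine Finset.sum_congr rfl fun a _ => Finset.sum_congr rfl fun h _ => ?_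
          rw [P_cons, Fin.prod_univ_succ]
          simp only [Fin.cons_zero, Fin.cons_succ]
      _ = ∑ h : Fin (k+1) → Fin m × Fin m, (∏ t, A (h t).1 (h t).2) • P h := by
          rw [← Fintype.sum_prod_type']
          exact Fintype.sum_equiv (Fin.consEquiv (fun _ => Fin m × Fin m))
            _ _ (fun ah => rfl)

lemma P_eq_zero_of_dup {k : ℕ} (h : Fin k → Fin m × Fin m) {t₁ t₂ : Fin k}
    (hne : t₁ ≠ t₂) (hz : p (h t₁).1 (h t₁).2 * p (h t₂).1 (h t₂).2 = 0) :
    P h = 0 := by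
  classical
  set f : Fin k → Gr m := fun t => p (h t).1 (h t).2 with hf
  have h₁ : t₁ ∈ List.finRange k := List.mem_finRange t₁
  have h₂ : t₂ ∈ (List.finRange k).erase t₁ :=
    (List.mem_erase_of_ne hne.symm).mpr (List.mem_finRange t₂)
  have hperm : List.finRange k ~ t₁ :: t₂ :: ((List.finRange k).erase t₁).erase t₂ :=
    (List.perm_cons_erase h₁).trans ((List.perm_cons_erase h₂).cons t₁)
  have hpw : ((List.finRange k).map f).Pairwise Commute :=
    pairwise_commute_map f (fun a b => p_commute _ _ _ _) _
  have := List.Perm.prod_eq' (hperm.map f) hpw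
  rw [P, ← hf, this, List.map_cons, List.map_cons, List.prod_cons, List.prod_cons,
    ← mul_assoc, hz, zero_mul]

lemma P_eq_zero_fst {k : ℕ} (h : Fin k → Fin m × Fin m)
    (hni : ¬ Function.Injective (fun t => (h t).1)) : P h = 0 := by
  obtain ⟨t₁, t₂, heq, hne⟩ := Function.not_injective_iff.mp hni
  exact P_eq_zero_of_dup h hne (by rw [heq]; exact p_mul_p_same_fst _ _ _)

lemma P_eq_zero_snd {k : ℕ} (h : Fin k → Fin m × Fin m)
    (hni : ¬ Function.Injective (fun t => (h t).2)) : P h = 0 := by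
  obtain ⟨t₁, t₂, heq, hne⟩ := Function.not_injective_iff.mp hni
  exact P_eq_zero_of_dup h hne (by rw [heq]; exact p_mul_p_same_snd _ _ _)

/-! ### vanishing of high powers -/

lemma F_pow_eq_zero (A : Matrix (Fin m) (Fin m) ℝ) {k : ℕ} (hk : m < k) :
    (∑ a : Fin m × Fin m, A a.1 a.2 • (psi a.1 * psibar a.2)) ^ k = 0 := by
  rw [F_pow]
  refine Finset.sum_eq_zero fun h _ => ?_
  rw [P_eq_zero_fst h, smul_zero]
  intro hinj
  have := Fintype.card_le_of_injective _ hinj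
  simp only [Fintype.card_fin] at this
  omega

/-! ### the P h lies in `avoid` when an index is missing -/

lemma P_mem_avoid_inl {k : ℕ} (h : Fin k → Fin m × Fin m) {i₀ : Fin m}
    (hi : ∀ t, (h t).1 ≠ i₀) : P h ∈ avoid (Sum.inl i₀) := by
  have key : ∀ l : List (Fin k),
      ((l.map (fun t => p (h t).1 (h t).2)).prod) ∈ avoid (Sum.inl i₀) := by
    intro l
    induction l with
    | nil => simpa using one_mem_avoid (Sum.inl i₀)
    | cons t l ih =>
      rw [List.map_cons, List.prod_cons]
      have h1 : (e (Sum.inl (h t).1) : V m) (Sum.inl i₀) = 0 :=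
        e_apply_ne (by simpa using fun hh : i₀ = (h t).1 => hi t hh.symm)
      have h2 : (e (Sum.inr (h t).2) : V m) (Sum.inl i₀) = 0 :=
        e_apply_ne (by simp)
      rw [p, psi_eq, psibar_eq, mul_assoc]
      exact mul_mem_avoid h1 (mul_mem_avoid h2 ih)
  exact key _

/-! ### operator identities -/

/-- the composite operator `∂_{ψ̄_i}∂_{ψ_i}` -/
def D {m : ℕ} (i : Fin m) : Module.End ℝ (Gr m) := der (Sum.inr i) * der (Sum.inl i)

lemma berezin_eq : berezin m = ((List.finRange m).map (D (m := m))).prod := rfl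

lemma der_anticomm (x y : Fin m ⊕ Fin m) :
    (der x * der y : Module.End ℝ (Gr m)) = -(der y * der x) := by
  refine LinearMap.ext fun a => ?_
  simp only [Module.End.mul_apply, LinearMap.neg_apply, der]
  exact CliffordAlgebra.contractLeft_comm _ _ a

lemma D_commute (i j : Fin m) : Commute (D i) (D j) :=
  comm_of_anticomm (der_anticomm _ _) (der_anticomm _ _) (der_anticomm _ _) (der_anticomm _ _)

lemma pairwise_commute_D (l : List (Fin m)) : (l.map D).Pairwise Commute :=
  pairwise_commute_map D (fun a b => D_commute a b) l

/-- pull one factor of the Berezin product to the inside -/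
lemma berezin_factor (i₀ : Fin m) :
    berezin m = (((List.finRange m).erase i₀).map D).prod * D i₀ := by
  classical
  have h₁ : i₀ ∈ List.finRange m := List.mem_finRange i₀
  have hperm : ((List.finRange m).erase i₀) ++ [i₀] ~ List.finRange m :=
    (List.perm_append_singleton i₀ _).trans (List.perm_cons_erase h₁).symm
  have := List.Perm.prod_eq' ((hperm.map D).symm) (pairwise_commute_D _)
  rw [berezin_eq, this, List.map_append, List.prod_append, List.map_singleton,
    List.prod_singleton]

lemma berezin_P_eq_zero {k : ℕ} (h : Fin k → Fin m × Fin m) {i₀ : Fin m}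
    (hi : ∀ t, (h t).1 ≠ i₀) : berezin m (P h) = 0 := by
  rw [berezin_factor i₀]
  have h1 : der (Sum.inl i₀) (P h) = 0 :=
    der_eq_zero_of_mem_avoid (P_mem_avoid_inl h hi)
  have : (D i₀) (P h) = 0 := by
    show der (Sum.inr i₀) (der (Sum.inl i₀) (P h)) = 0
    rw [h1, map_zero]
  show ((((List.finRange m).erase i₀).map D).prod) ((D i₀) (P h)) = 0
  rw [this, map_zero]

lemma berezin_F_pow_lt (A : Matrix (Fin m) (Fin m) ℝ) {k : ℕ} (hk : k < m) :
    berezin m ((∑ a : Fin m × Fin m, A a.1 a.2 • (psi a.1 * psibar a.2)) ^ k) = 0 := by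
  rw [F_pow, map_sum]
  refine Finset.sum_eq_zero fun h _ => ?_
  rw [map_smul]
  have : ¬ Function.Surjective (fun t => (h t).1) := by
    intro hs
    have := Fintype.card_le_of_surjective _ hs
    simp only [Fintype.card_fin] at this
    omega
  simp only [Function.Surjective, not_forall, not_exists] at this
  obtain ⟨i₀, hi₀⟩ := this
  rw [berezin_P_eq_zero h (fun t => hi₀ t), smul_zero]

/-! ### computation of `berezin` on the top monomial -/

lemma D_p_mul {i j : Fin m} (hij : j ≠ i) (z : Gr m) :
    (D j) (p i i * z) = p i i * (D j) z := by
  have h1 : (e (Sum.inl i) : V m) (Sum.inl j) = 0 := e_apply_ne (by simpa using hij)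
  have h2 : (e (Sum.inr i) : V m) (Sum.inl j) = 0 := e_apply_ne (by simp)
  have h3 : (e (Sum.inl i) : V m) (Sum.inr j) = 0 := e_apply_ne (by simp)
  have h4 : (e (Sum.inr i) : V m) (Sum.inr j) = 0 := e_apply_ne (by simpa using hij)
  have key : ∀ (x : Fin m ⊕ Fin m), (e (Sum.inl i) : V m) x = 0 →
      (e (Sum.inr i) : V m) x = 0 → ∀ w : Gr m,
      der x (p i i * w) = p i i * der x w := by
    intro x hx1 hx2 w
    rw [p, psi_eq, psibar_eq, mul_assoc, der_ι_mul_of_zero x hx1,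
      der_ι_mul_of_zero x hx2, mul_assoc]
    rw [mul_neg, neg_neg]
  show der (Sum.inr j) (der (Sum.inl j) (p i i * z)) = p i i * der (Sum.inr j) (der (Sum.inl j) z)
  rw [key _ h1 h2, key _ h3 h4]

lemma D_p_self (i : Fin m) : (D i) (p i i) = 1 := by
  show der (Sum.inr i) (der (Sum.inl i) (p i i)) = 1
  rw [p, psi_eq, psibar_eq, der_ι_mul, e_apply_self, one_smul, der_ι,
    e_apply_ne (by simp : (Sum.inl i : Fin m ⊕ Fin m) ≠ Sum.inr i)]
  rw [map_zero, mul_zero, sub_zero, der_ι, e_apply_self, map_one]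

lemma Op_p_mul {l : List (Fin m)} {i : Fin m} (hi : i ∉ l) (z : Gr m) :
    ((l.map D).prod) (p i i * z) = p i i * ((l.map D).prod) z := by
  induction l with
  | nil => rfl
  | cons j l ih =>
    have hij : j ≠ i := by rintro rfl; exact hi List.mem_cons_self
    have hi' : i ∉ l := fun h => hi (List.mem_cons_of_mem _ h)
    rw [List.map_cons, List.prod_cons]
    show (D j) (((l.map D).prod) (p i i * z)) = _
    rw [ih hi', D_p_mul hij]
    rfl

lemma Op_top (l : List (Fin m)) (hl : l.Nodup) :
    ((l.map D).prod) ((l.map (fun t => p t t)).prod) = 1 := by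
  induction l with
  | nil => rfl
  | cons i l ih =>
    have hi : i ∉ l := (List.nodup_cons.mp hl).1
    have hl' : l.Nodup := (List.nodup_cons.mp hl).2
    rw [List.map_cons, List.prod_cons, List.map_cons, List.prod_cons]
    show (D i) (((l.map D).prod) (p i i * (l.map (fun t => p t t)).prod)) = 1
    rw [Op_p_mul hi, ih hl', mul_one, D_p_self]

/-- the top monomial -/
def Top (m : ℕ) : Gr m := ((List.finRange m).map (fun t => p t t)).prod

lemma berezin_Top : berezin m (Top m) = 1 := by
  rw [berezin_eq]
  exact Op_top _ (List.nodup_finRange m)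

/-! ### signs -/

/-- product with row permutation `σ` and column assignment `τ` -/
def Pst {m : ℕ} (σ τ : Fin m → Fin m) : Gr m :=
  ((List.finRange m).map (fun t => p (σ t) (τ t))).prod

lemma P_eq_Pst (σ τ : Fin m → Fin m) :
    P (fun t => (σ t, τ t)) = Pst σ τ := rfl

lemma Pst_id_id : Pst (id : Fin m → Fin m) id = Top m := rfl

lemma Pst_reindex (σ : Equiv.Perm (Fin m)) (τ : Fin m → Fin m) :
    Pst (⇑σ) τ = Pst id (τ ∘ ⇑σ.symm) := by
  classical
  have hmap : (List.finRange m).map (fun t => p (σ t) (τ t)) =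
      (((List.finRange m).map ⇑σ).map (fun s => p s ((τ ∘ ⇑σ.symm) s))) := by
    rw [List.map_map]
    refine List.map_congr_left fun t _ => ?_
    simp
  have hperm : ((List.finRange m).map ⇑σ) ~ List.finRange m := by
    refine List.perm_of_nodup_nodup_toFinset_eq
      ((List.nodup_finRange m).map σ.injective) (List.nodup_finRange m) ?_
    refine Finset.eq_of_subset_of_card_le (fun x hx => ?_) ?_
    · simp
    · rw [List.card_toFinset, List.card_toFinset,
        ((List.nodup_finRange m).map σ.injective).dedup,
        (List.nodup_finRange m).dedup, List.length_map]
  have hpw : (((List.finRange m).map ⇑σ).map (fun s => p s ((τ ∘ ⇑σ.symm) s))).Pairwise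
      Commute := pairwise_commute_map _ (fun a b => p_commute _ _ _ _) _
  rw [Pst, hmap, List.Perm.prod_eq' (hperm.map _) hpw]
  rfl

/-- the sign as a real number -/
def sgn {m : ℕ} (σ : Equiv.Perm (Fin m)) : ℝ := ((Equiv.Perm.sign σ : ℤ) : ℝ)

lemma sgn_one : sgn (1 : Equiv.Perm (Fin m)) = 1 := by simp [sgn]

lemma sgn_mul (σ τ : Equiv.Perm (Fin m)) : sgn (σ * τ) = sgn σ * sgn τ := by
  simp [sgn, ← Int.cast_mul]

lemma sgn_swap {x y : Fin m} (h : x ≠ y) : sgn (Equiv.swap x y) = -1 := by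
  simp [sgn, Equiv.Perm.sign_swap h]

lemma sgn_sq (σ : Equiv.Perm (Fin m)) : sgn σ * sgn σ = 1 := by
  rcases Int.units_eq_one_or (Equiv.Perm.sign σ) with h | h <;> simp [sgn, h]

lemma Pst_id_perm (π : Equiv.Perm (Fin m)) :
    Pst id (⇑π) = sgn π • Top m := by
  classical
  refine Equiv.Perm.swap_induction_on π ?_ ?_
  · rw [show ⇑(1 : Equiv.Perm (Fin m)) = id from rfl, Pst_id_id, sgn_one, one_smul]
  · intro π' x y hxy ih
    set t₁ : Fin m := π'.symm x with ht₁
    set t₂ : Fin m := π'.symm y with ht₂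
    have hne : t₁ ≠ t₂ := fun h => hxy (by
      have := congrArg π' h
      simpa [ht₁, ht₂] using this)
    have h₁ : t₁ ∈ List.finRange m := List.mem_finRange t₁
    have h₂ : t₂ ∈ (List.finRange m).erase t₁ :=
      (List.mem_erase_of_ne hne.symm).mpr (List.mem_finRange t₂)
    have hperm : List.finRange m ~ t₁ :: t₂ :: ((List.finRange m).erase t₁).erase t₂ :=
      (List.perm_cons_erase h₁).trans ((List.perm_cons_erase h₂).cons t₁)
    set rest := ((List.finRange m).erase t₁).erase t₂ with hrest
    have hrest_mem : ∀ t ∈ rest, t ≠ t₁ ∧ t ≠ t₂ := by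
      intro t ht
      have ht' := (List.Nodup.mem_erase_iff ((List.nodup_finRange m).erase t₁)).mp ht
      have ht'' := (List.Nodup.mem_erase_iff (List.nodup_finRange m)).mp ht'.2
      exact ⟨ht''.1, ht'.1⟩
    have key : ∀ (g : Fin m → Fin m),
        Pst id g = p t₁ (g t₁) * (p t₂ (g t₂) * ((rest.map (fun t => p t (g t))).prod)) := by
      intro g
      have hpw : ((List.finRange m).map (fun t => p t (g t))).Pairwise Commute :=
        pairwise_commute_map _ (fun a b => p_commute _ _ _ _) _
      rw [Pst]
      simp only [id_eq]
      rw [List.Perm.prod_eq' (hperm.map _) hpw, List.map_cons, List.map_cons,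
        List.prod_cons, List.prod_cons]
    have hrest_eq : (rest.map (fun t => p t ((Equiv.swap x y * π') t))).prod =
        (rest.map (fun t => p t (π' t))).prod := by
      congr 1
      refine List.map_congr_left fun t ht => ?_
      obtain ⟨hne₁, hne₂⟩ := hrest_mem t ht
      have hx : π' t ≠ x := fun h => hne₁ (by rw [ht₁, ← h, Equiv.symm_apply_apply])
      have hy : π' t ≠ y := fun h => hne₂ (by rw [ht₂, ← h, Equiv.symm_apply_apply])
      simp [Equiv.swap_apply_of_ne_of_ne hx hy]
    have e₁ : (Equiv.swap x y * π') t₁ = y := by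
      simp [ht₁, Equiv.swap_apply_def]
    have e₂ : (Equiv.swap x y * π') t₂ = x := by
      simp [ht₂, Equiv.swap_apply_def, hxy.symm]
    have f₁ : π' t₁ = x := by simp [ht₁]
    have f₂ : π' t₂ = y := by simp [ht₂]
    rw [key ⇑(Equiv.swap x y * π'), hrest_eq, e₁, e₂]
    have := key ⇑π'
    rw [f₁, f₂] at this
    set R := (rest.map (fun t => p t (π' t))).prod with hR
    have hswap : p t₁ y * (p t₂ x * R) = -(p t₁ x * (p t₂ y * R)) := by
      rw [← mul_assoc, ← mul_assoc, p_swap t₁ t₂ y x]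
      noncomm_ring
    rw [hswap, ← this, ih, sgn_mul, sgn_swap hxy]
    rw [← neg_smul]
    ring_nf

lemma Pst_eq_sgn_smul (σ τ : Equiv.Perm (Fin m)) :
    Pst (⇑σ) (⇑τ) = (sgn σ * sgn τ) • Top m := by
  have h1 : Pst (⇑σ) (⇑τ) = Pst id (⇑(τ * σ⁻¹)) := by
    rw [Pst_reindex σ ⇑τ]
    rfl
  rw [h1, Pst_id_perm, sgn_mul]
  congr 1
  have : sgn σ⁻¹ = sgn σ := by
    have h := sgn_mul σ σ⁻¹
    rw [mul_inv_cancel, sgn_one] at h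
    rcases Int.units_eq_one_or (Equiv.Perm.sign σ) with hs | hs <;>
      rcases Int.units_eq_one_or (Equiv.Perm.sign σ⁻¹) with hs' | hs' <;>
      simp_all [sgn]
  rw [this]
  ring

/-! ### sum over permutations -/

lemma sum_eq_sum_perm {M : Type*} [AddCommMonoid M] (X : (Fin m → Fin m) → M)
    (hX : ∀ f, ¬ Function.Bijective f → X f = 0) :
    ∑ f : Fin m → Fin m, X f = ∑ σ : Equiv.Perm (Fin m), X ⇑σ := by
  classical
  rw [← Finset.sum_filter_of_ne (p := fun f => Function.Bijective f)
    (fun f _ hf => by by_contra hb; exact hf (hX f hb))]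
  refine (Finset.sum_bij (fun (σ : Equiv.Perm (Fin m)) _ => ⇑σ) ?_ ?_ ?_ ?_).symm
  · intro σ _
    simp only [Finset.mem_filter, Finset.mem_univ, true_and]
    exact σ.bijective
  · intro σ _ τ _ h
    exact Equiv.coe_fn_injective h
  · intro f hf
    simp only [Finset.mem_filter, Finset.mem_univ, true_and] at hf
    exact ⟨Equiv.ofBijective f hf, Finset.mem_univ _, rfl⟩
  · intro σ _
    rfl

/-- the permutation-sum scalar identity -/
lemma sum_sgn_prod (A : Matrix (Fin m) (Fin m) ℝ) :
    ∑ σ : Equiv.Perm (Fin m), ∑ τ : Equiv.Perm (Fin m),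
      (∏ t, A (σ t) (τ t)) * (sgn σ * sgn τ) = (m.factorial : ℝ) * A.det := by
  have inner : ∀ σ : Equiv.Perm (Fin m),
      ∑ τ : Equiv.Perm (Fin m), (∏ t, A (σ t) (τ t)) * (sgn σ * sgn τ) = A.det := by
    intro σ
    rw [← Equiv.sum_comp (Equiv.mulRight σ)
      (fun τ => (∏ t, A (σ t) (τ t)) * (sgn σ * sgn τ))]
    have step : ∀ π : Equiv.Perm (Fin m),
        (∏ t, A (σ t) ((Equiv.mulRight σ π) t)) * (sgn σ * sgn (Equiv.mulRight σ π))
          = sgn π * ∏ i, A i (π i) := by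
      intro π
      have hco : ∀ t, (Equiv.mulRight σ π) t = π (σ t) := fun t => rfl
      have hprod : ∏ t, A (σ t) (π (σ t)) = ∏ i, A i (π i) :=
        Equiv.prod_comp σ (fun i => A i (π i))
      simp only [hco, hprod]
      rw [show Equiv.mulRight σ π = π * σ from rfl, sgn_mul]
      have hs : sgn σ * (sgn π * sgn σ) = sgn π := by
        calc sgn σ * (sgn π * sgn σ) = (sgn σ * sgn σ) * sgn π := by ring
          _ = sgn π := by rw [sgn_sq, one_mul]
      rw [hs]
      ring
    rw [Finset.sum_congr rfl (fun π _ => step π)]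
    rw [show A.det = A.transpose.det from (Matrix.det_transpose A).symm,
      Matrix.det_apply']
    refine Finset.sum_congr rfl fun π _ => ?_
    simp [sgn, Matrix.transpose_apply]
  rw [Finset.sum_congr rfl (fun σ _ => inner σ), Finset.sum_const, Finset.card_univ,
    Fintype.card_perm, Fintype.card_fin, nsmul_eq_mul]

/-! ### the top power -/

lemma F_pow_top (A : Matrix (Fin m) (Fin m) ℝ) :
    (∑ a : Fin m × Fin m, A a.1 a.2 • (psi a.1 * psibar a.2)) ^ m
      = ((m.factorial : ℝ) * A.det) • Top m := by
  classical
  rw [F_pow]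
  rw [← Fintype.sum_equiv (Equiv.arrowProdEquivProdArrow (Fin m) (fun _ => Fin m) (fun _ => Fin m)).symm
    (fun fg : (Fin m → Fin m) × (Fin m → Fin m) =>
      (∏ t, A (fg.1 t) (fg.2 t)) • P (fun t => (fg.1 t, fg.2 t)))
    (fun h : Fin m → Fin m × Fin m => (∏ t, A (h t).1 (h t).2) • P h)
    (fun fg => rfl)]
  rw [Fintype.sum_prod_type]
  have outer : ∑ f : Fin m → Fin m, ∑ g : Fin m → Fin m,
      (∏ t, A (f t) (g t)) • P (fun t => (f t, g t))
      = ∑ σ : Equiv.Perm (Fin m), ∑ τ : Equiv.Perm (Fin m),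
        (∏ t, A (σ t) (τ t)) • P (fun t => (σ t, τ t)) := by
    rw [sum_eq_sum_perm (fun f => ∑ g : Fin m → Fin m,
      (∏ t, A (f t) (g t)) • P (fun t => (f t, g t)))]
    · refine Finset.sum_congr rfl fun σ _ => ?_
      exact sum_eq_sum_perm (fun g => (∏ t, A (σ t) (g t)) • P (fun t => (σ t, g t)))
        (fun g hg => by
          show (∏ t, A (σ t) (g t)) • P (fun t => (σ t, g t)) = 0
          rw [P_eq_zero_snd _ (fun hinj => hg ((Fintype.bijective_iff_injective_and_card g).mpr
            ⟨hinj, rfl⟩)), smul_zero])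
    · intro f hf
      show ∑ g : Fin m → Fin m, (∏ t, A (f t) (g t)) • P (fun t => (f t, g t)) = 0
      refine Finset.sum_eq_zero fun g _ => ?_
      rw [P_eq_zero_fst _ (fun hinj => hf ((Fintype.bijective_iff_injective_and_card f).mpr
        ⟨hinj, rfl⟩)), smul_zero]
  rw [outer]
  have term : ∀ σ τ : Equiv.Perm (Fin m),
      (∏ t, A (σ t) (τ t)) • P (fun t => (σ t, τ t))
        = ((∏ t, A (σ t) (τ t)) * (sgn σ * sgn τ)) • Top m := by
    intro σ τ
    rw [P_eq_Pst, Pst_eq_sgn_smul, smul_smul]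
  calc ∑ σ : Equiv.Perm (Fin m), ∑ τ : Equiv.Perm (Fin m),
        (∏ t, A (σ t) (τ t)) • P (fun t => (σ t, τ t))
      = ∑ σ : Equiv.Perm (Fin m), ∑ τ : Equiv.Perm (Fin m),
        ((∏ t, A (σ t) (τ t)) * (sgn σ * sgn τ)) • Top m := by
        exact Finset.sum_congr rfl fun σ _ => Finset.sum_congr rfl fun τ _ => term σ τ
    _ = (∑ σ : Equiv.Perm (Fin m), ∑ τ : Equiv.Perm (Fin m),
        (∏ t, A (σ t) (τ t)) * (sgn σ * sgn τ)) • Top m := by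
        simp only [Finset.sum_smul]
    _ = ((m.factorial : ℝ) * A.det) • Top m := by rw [sum_sgn_prod]

end Aux

/-- **Gaussian integral for "complex" fermions**:
`(∏_{i=1}^m ∂_{ψ̄_i}∂_{ψ_i}) exp(∑_{i,j} ψ_i A_{ij} ψ̄_j) = det A`. -/
theorem berezin_gexp_eq_det (m : ℕ) (A : Matrix (Fin m) (Fin m) ℝ) :
    berezin m (gexp (∑ i, ∑ j, A i j • (psi i * psibar j))) =
      algebraMap ℝ (Gr m) A.det := by
  classical
  set F : Gr m := ∑ a : Fin m × Fin m, A a.1 a.2 • (psi a.1 * psibar a.2) with hF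
  have hFeq : (∑ i, ∑ j, A i j • (psi i * psibar j)) = F := by
    rw [hF, ← Finset.sum_product', Finset.univ_product_univ]
  rw [hFeq]
  have hgexp : gexp F = ∑ k ∈ Finset.range (m + 1), (k.factorial : ℝ)⁻¹ • F ^ k := by
    rw [gexp]
    refine finsum_eq_sum_of_support_subset _ ?_
    intro k hk
    simp only [Function.mem_support, ne_eq] at hk
    simp only [Finset.coe_range, Set.mem_Iio]
    by_contra hkm
    push_neg at hkm
    exact hk (by rw [hF, F_pow_eq_zero A (by omega), smul_zero])
  rw [hgexp, map_sum, Finset.sum_range_succ]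
  have hzero : ∀ k ∈ Finset.range m, berezin m ((k.factorial : ℝ)⁻¹ • F ^ k) = 0 := by
    intro k hk
    rw [map_smul, hF, berezin_F_pow_lt A (Finset.mem_range.mp hk), smul_zero]
  rw [Finset.sum_eq_zero hzero, zero_add, map_smul, hF, F_pow_top A, map_smul,
    berezin_Top, smul_smul, Algebra.algebraMap_eq_smul_one]
  congr 1
  have hfac : (m.factorial : ℝ) ≠ 0 := Nat.cast_ne_zero.mpr m.factorial_ne_zero
  field_simp

end Fermion
end
end

section
/- Let E be a finite set, τ a permutation of E, A ⊆ E nonempty, and a, b ∈ A (possibly a = b) such that: τ(f) ∈ A for every f ∈ A with f ≠ b; τ(b) ∉ A; and τ^{−1}(a) ∉ A. Define a permutation ω of A∖{a} by ω(f) := τ(f) for f ∈ A∖{a} with f ≠ b, and (in case a ≠ b) ω(b) := τ(a); define a permutation τ' of (E∖A) ∪ {a} by τ'(f) := τ(f) for f ∈ E∖A and τ'(a) := τ(b). Then ω and τ' are well-defined permutations of the indicated sets, and sign(τ) = ε · sign(τ') · sign(ω), where ε = 1 if a = b and ε = −1 if a ≠ b. (This is the sign identity in the 'surgery' Lemma 4.8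 of the paper, with a = η(v) the entry edge and b = γη(v) the exit edge.) -/
/-!
The sign identity in the "surgery" Lemma 4.8 of the paper.  `τ` is a permutation of a
finite set `E`, `A ⊆ E`, `a` is the entry edge and `b` the exit edge (possibly equal).
The local permutation `ω` of `A∖{a}` and the global permutation `τ'` of `(E∖A)∪{a}` are
realized as permutations of `E` fixing the complements of the indicated sets (so their
signs agree with the signs in the symmetric groups of those sets), and they are
characterized by the defining equations below.  The statement asserts that such `ω` and
`τ'` exist (well-definedness) and that for any such, `sign τ = ε · sign τ' · sign ω`
with `ε = 1` if `a = b` and `ε = −1` otherwise.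
-/

namespace Surgery

variable {E : Type*} [Fintype E] [DecidableEq E]

/-- `ω` is the local permutation of `A∖{a}` induced by `τ`: it agrees with `τ` on
`A∖{a}` away from `b`, sends `b` to `τ a` when `a ≠ b`, and fixes everything outside
`A∖{a}`. -/
def IsLocal (τ : Equiv.Perm E) (A : Finset E) (a b : E) (ω : Equiv.Perm E) : Prop :=
  (∀ f ∈ A, f ≠ a → f ≠ b → ω f = τ f) ∧
    (a ≠ b → ω b = τ a) ∧
      ∀ f, f ∉ A ∨ f = a → ω f = f

/-- `τ'` is the global permutation of `(E∖A)∪{a}` induced by `τ`: it agrees with `τ`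
outside `A`, sends `a` to `τ b`, and fixes `A∖{a}`. -/
def IsGlobal (τ : Equiv.Perm E) (A : Finset E) (a b : E) (τ' : Equiv.Perm E) : Prop :=
  (∀ f, f ∉ A → τ' f = τ f) ∧
    τ' a = τ b ∧
      ∀ f ∈ A, f ≠ a → τ' f = f

set_option linter.unusedSectionVars false in
lemma pre (τ : Equiv.Perm E) (A : Finset E) (a b : E)
    (ha : a ∈ A) (hb : b ∈ A)
    (hmaps : ∀ f ∈ A, f ≠ b → τ f ∈ A) (hentry : τ⁻¹ a ∉ A) :
    ∀ f ∈ A, f ≠ a → τ⁻¹ f ∈ A ∧ τ⁻¹ f ≠ b := by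
  have himg : (A.erase b).image τ = A.erase a := by
    apply Finset.eq_of_subset_of_card_le
    · intro x hx
      obtain ⟨y, hy, rfl⟩ := Finset.mem_image.mp hx
      obtain ⟨hyb, hyA⟩ := Finset.mem_erase.mp hy
      refine Finset.mem_erase.mpr ⟨?_, hmaps y hyA hyb⟩
      intro h
      apply hentry
      rw [← h, Equiv.Perm.inv_def, Equiv.symm_apply_apply]
      exact hyA
    · rw [Finset.card_image_of_injective _ τ.injective,
        Finset.card_erase_of_mem ha, Finset.card_erase_of_mem hb]
  intro f hf hfa
  have : f ∈ (A.erase b).image τ := by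
    rw [himg]; exact Finset.mem_erase.mpr ⟨hfa, hf⟩
  obtain ⟨g, hg, rfl⟩ := Finset.mem_image.mp this
  obtain ⟨hgb, hgA⟩ := Finset.mem_erase.mp hg
  rw [Equiv.Perm.inv_def, Equiv.symm_apply_apply]
  exact ⟨hgA, hgb⟩

set_option maxHeartbeats 800000 in
/-- **Sign identity of the surgery Lemma 4.8**: if `τ` maps `A∖{b}` into `A`, exits `A`
at `b` (`τ b ∉ A`) and enters `A` at `a` (`τ⁻¹ a ∉ A`), then the local permutation `ω`
of `A∖{a}` and the global permutation `τ'` of `(E∖A)∪{a}` are well defined, and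
`sign τ = ε · sign τ' · sign ω` where `ε = 1` if `a = b` and `ε = −1` if `a ≠ b`. -/
theorem sign_surgery (τ : Equiv.Perm E) (A : Finset E) (a b : E)
    (ha : a ∈ A) (hb : b ∈ A)
    (hmaps : ∀ f ∈ A, f ≠ b → τ f ∈ A)
    (hexit : τ b ∉ A) (hentry : τ⁻¹ a ∉ A) :
    (∃ ω : Equiv.Perm E, IsLocal τ A a b ω) ∧
      (∃ τ' : Equiv.Perm E, IsGlobal τ A a b τ') ∧
        ∀ ω τ' : Equiv.Perm E, IsLocal τ A a b ω → IsGlobal τ A a b τ' →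
          Equiv.Perm.sign τ =
            (if a = b then 1 else -1) * Equiv.Perm.sign τ' * Equiv.Perm.sign ω := by
  have hpre := pre τ A a b ha hb hmaps hentry
  have hta : ∀ f ∈ A, τ f ≠ a := by
    intro f hf h
    exact hentry (by rw [← h, Equiv.Perm.inv_def, Equiv.symm_apply_apply]; exact hf)
  -- construct τ'
  set c : Equiv.Perm E := if a = b then 1 else Equiv.swap a b with hc
  have hcE : ∀ f, f ≠ a → f ≠ b → c f = f := by
    intro f h1 h2
    by_cases hab : a = b <;> simp [hc, hab, Equiv.swap_apply_of_ne_of_ne h1 h2]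
  have hca : c a = b := by
    by_cases hab : a = b <;> simp [hc, hab]
  have hcb : c b = a := by
    by_cases hab : a = b
    · subst hab; simp [hc]
    · simp [hc, hab]
  let T : Equiv.Perm E :=
    { toFun := fun f => if f ∈ A then (if f = a then τ b else f) else τ f
      invFun := fun f => if f = τ b then a else if τ⁻¹ f ∈ A then f else τ⁻¹ f
      left_inv := by
        intro f
        by_cases hf : f ∈ A
        · by_cases hfa : f = a
          · subst hfa; simp [ha]
          · have h1 : f ≠ τ b := fun h => hexit (h ▸ hf)
            have h2 : τ⁻¹ f ∈ A := (hpre f hf hfa).1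
            simp [hf, hfa, h1, show τ.symm f ∈ A from h2]
        · have h1 : τ f ≠ τ b := fun h => hf (τ.injective h ▸ hb)
          simp [hf, h1]
      right_inv := by
        intro f
        by_cases h1 : f = τ b
        · simp [h1, ha]
        · by_cases h2 : τ⁻¹ f ∈ A
          · have h3 : τ⁻¹ f ≠ b := fun h => h1 (by rw [← h, Equiv.Perm.inv_def, Equiv.apply_symm_apply])
            have h4 : f ∈ A := by
              have := hmaps _ h2 h3
              rwa [Equiv.Perm.inv_def, Equiv.apply_symm_apply] at this
            have h5 : f ≠ a := fun h => hentry (h ▸ h2)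
            simp [h1, show τ.symm f ∈ A from h2, h4, h5]
          · have h6 : τ⁻¹ f ∉ A := h2
            simp [h1, show τ.symm f ∉ A from h2, Equiv.apply_symm_apply] }
  have hT : IsGlobal τ A a b T := by
    refine ⟨fun f hf => by simp [T, hf], by simp [T, ha], fun f hf hfa => by simp [T, hf, hfa]⟩
  -- construct ω
  have hOm : IsLocal τ A a b (T⁻¹ * τ * c) := by
    have key : ∀ x ∈ A, x ≠ a → T x = x := hT.2.2
    refine ⟨?_, ?_, ?_⟩
    · intro f hf hfa hfb
      have h1 : τ f ∈ A := hmaps f hf hfb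
      have h2 : τ f ≠ a := hta f hf
      simp only [Equiv.Perm.mul_apply, hcE f hfa hfb]
      rw [Equiv.Perm.inv_eq_iff_eq, key (τ f) h1 h2]
    · intro hab
      have h1 : τ a ∈ A := hmaps a ha (hab)
      have h2 : τ a ≠ a := hta a ha
      simp only [Equiv.Perm.mul_apply, hcb]
      rw [Equiv.Perm.inv_eq_iff_eq, key (τ a) h1 h2]
    · intro f hf
      rcases hf with hf | rfl
      · have h1 : c f = f := hcE f (fun h => hf (h ▸ ha)) (fun h => hf (h ▸ hb))
        simp only [Equiv.Perm.mul_apply, h1]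
        rw [Equiv.Perm.inv_eq_iff_eq]
        exact (hT.1 f hf).symm
      · simp only [Equiv.Perm.mul_apply, hca]
        rw [Equiv.Perm.inv_eq_iff_eq]
        exact hT.2.1.symm
  refine ⟨⟨_, hOm⟩, ⟨T, hT⟩, ?_⟩
  intro ω τ' hω hτ'
  have hmain : τ' * ω = τ * c := by
    ext f
    simp only [Equiv.Perm.mul_apply]
    by_cases hf : f ∈ A
    · by_cases hfa : f = a
      · subst hfa
        rw [hω.2.2 f (Or.inr rfl), hτ'.2.1, hca]
      · by_cases hfb : f = b
        · have hab : a ≠ b := fun h => hfa (hfb.trans h.symm)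
          rw [hfb, hω.2.1 hab, hcb]
          exact hτ'.2.2 _ (hmaps a ha hab) (hta a ha)
        · rw [hω.1 f hf hfa hfb, hcE f hfa hfb]
          exact hτ'.2.2 _ (hmaps f hf hfb) (hta f hf)
    · rw [hω.2.2 f (Or.inl hf), hcE f (fun h => hf (h ▸ ha)) (fun h => hf (h ▸ hb)),
        hτ'.1 f hf]
  have hτeq : τ = τ' * ω * c := by
    have hc2 : c * c = 1 := by
      by_cases hab : a = b <;> simp [hc, hab, Equiv.swap_mul_self]
    calc τ = τ * c * c := by rw [mul_assoc, hc2, mul_one]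
    _ = τ' * ω * c := by rw [← hmain]
  have hsc : Equiv.Perm.sign c = if a = b then 1 else -1 := by
    by_cases hab : a = b
    · simp [hc, hab]
    · simp [hc, hab, Equiv.Perm.sign_swap hab]
  rw [hτeq]
  simp only [map_mul, hsc]
  split_ifs <;> simp [mul_comm, mul_left_comm, mul_assoc]

end Surgery
end
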